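/- arXiv:1205.2425 — 7 statements merged into one kernel-verified Lean document; each statement's English description precedes it below -/
import Mathlib

section
/- The minimum number of adjacent-transposition moves needed to transform one binary string into another with the same multiset of symbols equals the sum over all i of |p_i − q_i|, where p_i and q_i are the positions of the i-th one in the two strings respectively. -/
/-- One move: swap two adjacent distinct symbols. -/
def SwapStep (s t : List Bool) : Prop :=
  ∃ (l r : List Bool) (a b : Bool), a ≠ b ∧
    s = l ++ [a, b] ++ r ∧ t = l ++ [b, a] ++ r

/-- The sorted list of positions of ones of a binary string. -/
def onePositions (s : List Bool) : List ℕ :=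
  (List.range s.length).filter (fun i => s.getD i false = true)

/-!
Let `P` and `Q` list the positions of the ones of `s` and `t`, and `D = ∑ |P i - Q i|`. A move
shifts exactly one entry of `P` by one, so it lowers `D` by at most one. Conversely, if `P ≠ Q`
and `P K < Q K` with `K` maximal, the cell right after `P K` holds a zero (the next one of `s`
would violate maximality), and swapping it with the one at `P K` lowers `D` by exactly one. If
instead some `Q K < P K`, the same move applied to `t` does it, and moves can be reversed.
-/

def SwapsTo (m : ℕ) (s t : List Bool) : Prop :=
  ∃ f : ℕ → List Bool, f 0 = s ∧ f m = t ∧ ∀ i < m, SwapStep (f i) (f (i + 1))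

theorem SwapStep.symm {s t : List Bool} (h : SwapStep s t) : SwapStep t s := by
  obtain ⟨l, r, a, b, hab, rfl, rfl⟩ := h
  exact ⟨l, r, b, a, hab.symm, rfl, rfl⟩

theorem SwapStep.perm {s t : List Bool} (h : SwapStep s t) : s.Perm t := by
  obtain ⟨l, r, a, b, -, rfl, rfl⟩ := h
  exact ((List.Perm.swap b a []).append_left l).append_right r

theorem swapsTo_zero_iff {s t : List Bool} : SwapsTo 0 s t ↔ s = t :=
  ⟨fun ⟨_, h0, ht, _⟩ => h0.symm.trans ht, fun h => ⟨fun _ => s, rfl, h, by simp⟩⟩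

theorem swapsTo_succ_iff {m : ℕ} {s t : List Bool} :
    SwapsTo (m + 1) s t ↔ ∃ s', SwapStep s s' ∧ SwapsTo m s' t := by
  constructor
  · rintro ⟨f, h0, hm, hf⟩
    exact ⟨f 1, h0 ▸ hf 0 m.succ_pos, fun i => f (i + 1), rfl, hm,
      fun i hi => hf (i + 1) (by omega)⟩
  · rintro ⟨s', hs', f, h0, hm, hf⟩
    refine ⟨fun | 0 => s | i + 1 => f i, rfl, hm, ?_⟩
    rintro (_ | i) hi
    · simpa [h0] using hs'
    · exact hf i (by omega)

theorem SwapsTo.append_swapStep {m : ℕ} {s t' t : List Bool} (h : SwapsTo m s t')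
    (ht : SwapStep t' t) : SwapsTo (m + 1) s t := by
  induction m generalizing s with
  | zero =>
    obtain rfl := swapsTo_zero_iff.1 h
    exact swapsTo_succ_iff.2 ⟨t, ht, swapsTo_zero_iff.2 rfl⟩
  | succ m ih =>
    obtain ⟨s', hs', h'⟩ := swapsTo_succ_iff.1 h
    exact swapsTo_succ_iff.2 ⟨s', hs', ih h'⟩

theorem mem_onePositions {s : List Bool} {i : ℕ} : i ∈ onePositions s ↔ s[i]? = some true := by
  simp only [onePositions, List.mem_filter, List.mem_range, List.getD_eq_getElem?_getD,
    List.getElem?_eq_some_iff]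
  constructor
  · rintro ⟨h, h'⟩
    exact ⟨h, by simpa [h] using h'⟩
  · rintro ⟨h, h'⟩
    exact ⟨h, by simp [h, h']⟩

theorem sortedLT_onePositions (s : List Bool) : (onePositions s).SortedLT :=
  (List.pairwise_lt_range.filter _).sortedLT

theorem onePositions_cons (a : Bool) (s : List Bool) :
    onePositions (a :: s) = (if a then [0] else []) ++ (onePositions s).map (· + 1) := by
  simp only [onePositions, List.length_cons, List.range_succ_eq_map, List.filter_cons,
    List.filter_map]
  cases a <;> simp [Function.comp_def]

theorem onePositions_append (u v : List Bool) :
    onePositions (u ++ v) = onePositions u ++ (onePositions v).map (· + u.length) := by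
  induction u with
  | nil => simp [onePositions]
  | cons a u ih =>
    simp only [List.cons_append, onePositions_cons, ih, List.map_append, List.map_map,
      List.length_cons, List.append_assoc]
    cases a <;> simp [Function.comp_def, Nat.add_assoc]

theorem length_onePositions (s : List Bool) : (onePositions s).length = s.count true := by
  induction s with
  | nil => rfl
  | cons a s ih => cases a <;> simp [onePositions_cons, ih]

theorem onePositions_append_true_false (l r : List Bool) :
    onePositions (l ++ [true, false] ++ r) =
      onePositions l ++ l.length :: (onePositions r).map (· + (l.length + 2)) := by
  simp [onePositions_append, onePositions_cons, Function.comp_def]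
  grind

theorem onePositions_append_false_true (l r : List Bool) :
    onePositions (l ++ [false, true] ++ r) =
      onePositions l ++ (l.length + 1) :: (onePositions r).map (· + (l.length + 2)) := by
  simp [onePositions_append, onePositions_cons, Function.comp_def]
  grind

theorem eq_of_onePositions_eq {s t : List Bool} (hlen : s.length = t.length)
    (h : onePositions s = onePositions t) : s = t := by
  refine List.ext_getElem hlen fun i hs ht => Bool.eq_iff_iff.2 ?_
  have := congrArg (i ∈ ·) h
  simpa [mem_onePositions, hs, ht] using this

def l1Dist (P Q : List ℕ) : ℕ :=
  ((P.zip Q).map fun x => ((x.1 : ℤ) - (x.2 : ℤ)).natAbs).sum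

@[simp]
theorem l1Dist_cons_cons (x y : ℕ) (P Q : List ℕ) :
    l1Dist (x :: P) (y :: Q) = ((x : ℤ) - y).natAbs + l1Dist P Q := by
  simp [l1Dist]

@[simp]
theorem l1Dist_nil_left (Q : List ℕ) : l1Dist [] Q = 0 := rfl

@[simp]
theorem l1Dist_nil_right (P : List ℕ) : l1Dist P [] = 0 := by
  simp [l1Dist]

theorem l1Dist_append {A B P Q : List ℕ} (h : A.length = B.length) :
    l1Dist (A ++ P) (B ++ Q) = l1Dist A B + l1Dist P Q := by
  simp [l1Dist, List.zip_append h]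

@[simp]
theorem l1Dist_self (P : List ℕ) : l1Dist P P = 0 := by
  induction P <;> simp_all

theorem l1Dist_comm (P Q : List ℕ) : l1Dist P Q = l1Dist Q P := by
  induction P generalizing Q with
  | nil => simp
  | cons x P ih =>
    obtain _ | ⟨y, Q⟩ := Q
    · simp
    simp only [l1Dist_cons_cons, ih]
    omega

theorem l1Dist_triangle {P Q : List ℕ} (R : List ℕ) (h : P.length = Q.length) :
    l1Dist P R ≤ l1Dist P Q + l1Dist Q R := by
  induction P generalizing Q R with
  | nil => simp
  | cons x P ih =>
    obtain _ | ⟨y, Q⟩ := Q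
    · simp at h
    obtain _ | ⟨z, R⟩ := R
    · simp
    have := ih R (Q := Q) (by simpa using h)
    simp only [l1Dist_cons_cons]
    omega

theorem l1Dist_append_cons_succ {A C Q : List ℕ} {j : ℕ} (hA : A.length < Q.length)
    (hj : j < Q[A.length]) : l1Dist (A ++ (j + 1) :: C) Q + 1 = l1Dist (A ++ j :: C) Q := by
  rw [← List.take_append_drop A.length Q, List.drop_eq_getElem_cons hA,
    l1Dist_append (by simp; omega), l1Dist_append (by simp; omega)]
  simp only [l1Dist_cons_cons]
  omega

theorem l1Dist_onePositions_of_swapStep {s s' : List Bool} (h : SwapStep s s') :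
    l1Dist (onePositions s) (onePositions s') = 1 := by
  obtain ⟨l, r, a, b, hab, rfl, rfl⟩ := h
  cases a <;> cases b <;> simp only [ne_eq, not_true_eq_false] at hab <;>
    rw [onePositions_append_true_false, onePositions_append_false_true, l1Dist_append rfl] <;>
    simp

theorem l1Dist_onePositions_le_of_swapsTo {m : ℕ} {s t : List Bool} (h : SwapsTo m s t) :
    l1Dist (onePositions s) (onePositions t) ≤ m := by
  induction m generalizing s with
  | zero => simp [swapsTo_zero_iff.1 h]
  | succ m ih =>
    obtain ⟨s', hs', h'⟩ := swapsTo_succ_iff.1 h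
    have hlen : (onePositions s).length = (onePositions s').length := by
      simp only [length_onePositions, hs'.perm.count_eq]
    calc l1Dist (onePositions s) (onePositions t)
        ≤ l1Dist (onePositions s) (onePositions s') + l1Dist (onePositions s') (onePositions t) :=
          l1Dist_triangle _ hlen
      _ ≤ m + 1 := by rw [l1Dist_onePositions_of_swapStep hs']; have := ih h'; omega

theorem List.exists_maximal_getElem_lt {α : Type*} [LinearOrder α] {P Q : List α}
    (hPQ : P.length = Q.length) (h : ∃ K, ∃ hK : K < P.length, P[K] < Q[K]) :
    ∃ K, ∃ hK : K < P.length, P[K] < Q[K] ∧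
      ∀ K' (hK' : K' < P.length), K < K' → Q[K'] ≤ P[K'] := by
  classical
  let p : ℕ → Prop := fun K => ∃ hK : K < P.length, P[K] < Q[K]
  obtain ⟨K₀, hK₀⟩ := h
  have hK : p (Nat.findGreatest p P.length) := Nat.findGreatest_spec hK₀.1.le hK₀
  obtain ⟨hKlen, hKlt⟩ := hK
  refine ⟨_, hKlen, hKlt, fun K' hK' hKK' => not_lt.1 fun hlt => ?_⟩
  exact Nat.findGreatest_is_greatest hKK' hK'.le ⟨hK', hlt⟩

theorem List.eq_take_append_pair_append_drop {α : Type*} {l : List α} {j : ℕ} {a b : α}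
    (ha : l[j]? = some a) (hb : l[j + 1]? = some b) :
    l = l.take j ++ [a, b] ++ l.drop (j + 2) := by
  obtain ⟨hj, rfl⟩ := List.getElem?_eq_some_iff.1 ha
  obtain ⟨hj1, rfl⟩ := List.getElem?_eq_some_iff.1 hb
  conv_lhs => rw [← List.take_append_drop j l, List.drop_eq_getElem_cons hj,
    List.drop_eq_getElem_cons hj1]
  simp

theorem exists_swapStep_of_getElem_lt {s t : List Bool} (hlen : t.length ≤ s.length)
    (hones : (onePositions s).length = (onePositions t).length) {K : ℕ}
    (hK : K < (onePositions s).length) (hlt : (onePositions s)[K] < (onePositions t)[K])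
    (hmax : ∀ K' (hK' : K' < (onePositions s).length), K < K' →
      (onePositions t)[K'] ≤ (onePositions s)[K']) :
    ∃ s', SwapStep s s' ∧
      l1Dist (onePositions s') (onePositions t) + 1 =
        l1Dist (onePositions s) (onePositions t) := by
  obtain ⟨j, hj⟩ : ∃ j, (onePositions s)[K] = j := ⟨_, rfl⟩
  have hsj : s[j]? = some true := mem_onePositions.1 (hj ▸ List.getElem_mem hK)
  have hj1 : j + 1 < s.length := by
    have hKt : K < (onePositions t).length := hones ▸ hK
    have := (List.getElem?_eq_some_iff.1 (mem_onePositions.1 (List.getElem_mem hKt))).1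
    omega
  have hsj1 : s[j + 1]? = some false := by
    rw [List.getElem?_eq_getElem hj1, Option.some_inj, Bool.eq_false_iff]
    -- a one at `j + 1` would be the next one, at some `K' > K`, with `Q[K'] > Q[K] ≥ j + 1 = P[K']`
    intro hone
    obtain ⟨K', hK', hK'j⟩ := List.getElem_of_mem
      (mem_onePositions.2 (by rw [List.getElem?_eq_getElem hj1, hone]))
    have hKK' : K < K' := (sortedLT_onePositions s).getElem_lt_getElem_iff.1 (by omega)
    have : (onePositions t)[K] < (onePositions t)[K'] :=
      (sortedLT_onePositions t).getElem_lt_getElem_iff.2 hKK'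
    have := hmax K' hK' hKK'
    omega
  have hs := List.eq_take_append_pair_append_drop hsj hsj1
  have hl : (s.take j).length = j := by simp; omega
  have hP : onePositions s = onePositions (s.take j) ++
      j :: (onePositions (s.drop (j + 2))).map (· + (j + 2)) := by
    conv_lhs => rw [hs]
    rw [onePositions_append_true_false, hl]
  have hKl : (onePositions (s.take j)).length = K := by
    have hmem : (onePositions (s.take j)).length < (onePositions s).length := by
      rw [hP]; simp
    refine ((sortedLT_onePositions s).nodup.getElem_inj_iff (hi := hmem) (hj := hK)).1 ?_
    rw [hj]
    simp only [hP, List.getElem_append_right (le_refl _), Nat.sub_self, List.getElem_cons_zero]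
  refine ⟨s.take j ++ [false, true] ++ s.drop (j + 2), ⟨_, _, true, false, by simp, hs, rfl⟩, ?_⟩
  rw [onePositions_append_false_true, hl, hP]
  exact l1Dist_append_cons_succ (by omega) (by simpa [hKl, hj] using hlt)

theorem exists_swapStep_toward {s t : List Bool} (hlen : s.length = t.length)
    (hcount : s.count true = t.count true) (hne : s ≠ t) :
    (∃ s', SwapStep s s' ∧
      l1Dist (onePositions s') (onePositions t) + 1 =
        l1Dist (onePositions s) (onePositions t)) ∨
    (∃ t', SwapStep t t' ∧
      l1Dist (onePositions s) (onePositions t') + 1 =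
        l1Dist (onePositions s) (onePositions t)) := by
  have hones : (onePositions s).length = (onePositions t).length := by
    simp only [length_onePositions, hcount]
  obtain ⟨K, hK, hK', hne⟩ : ∃ K, ∃ (hK : K < (onePositions s).length)
      (hK' : K < (onePositions t).length), (onePositions s)[K] ≠ (onePositions t)[K] := by
    by_contra! h
    exact hne (eq_of_onePositions_eq hlen (List.ext_getElem hones h))
  rcases hne.lt_or_gt with hlt | hgt
  · left
    obtain ⟨K, hK, hlt, hmax⟩ := List.exists_maximal_getElem_lt hones ⟨K, hK, hlt⟩
    exact exists_swapStep_of_getElem_lt hlen.ge hones hK hlt hmax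
  · right
    obtain ⟨K, hK, hlt, hmax⟩ := List.exists_maximal_getElem_lt hones.symm ⟨K, hK', hgt⟩
    simpa only [l1Dist_comm (onePositions s)] using
      exists_swapStep_of_getElem_lt hlen.le hones.symm hK hlt hmax

theorem swapsTo_l1Dist_onePositions {s t : List Bool} (hlen : s.length = t.length)
    (hcount : s.count true = t.count true) :
    SwapsTo (l1Dist (onePositions s) (onePositions t)) s t := by
  obtain ⟨d, hd⟩ : ∃ d, l1Dist (onePositions s) (onePositions t) = d := ⟨_, rfl⟩
  rw [hd]
  induction d generalizing s t with
  | zero =>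
    rcases eq_or_ne s t with rfl | hne
    · exact swapsTo_zero_iff.2 rfl
    · rcases exists_swapStep_toward hlen hcount hne with ⟨_, -, h⟩ | ⟨_, -, h⟩ <;> omega
  | succ d ih =>
    rcases eq_or_ne s t with rfl | hne
    · simp at hd
    rcases exists_swapStep_toward hlen hcount hne with ⟨s', hs', h⟩ | ⟨t', ht', h⟩
    · exact swapsTo_succ_iff.2 ⟨s', hs', ih (hs'.perm.length_eq ▸ hlen)
        (hs'.perm.count_eq true ▸ hcount) (by omega)⟩
    · exact (ih (hlen.trans ht'.perm.length_eq) (hcount.trans (ht'.perm.count_eq true))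
        (by omega)).append_swapStep ht'.symm

/-- The minimum number of adjacent transposition moves between two binary
strings of the same length with the same number of ones equals
`∑ i |p i - q i|` where `p, q` are the sorted position lists of their ones. -/
theorem stmt2 (s t : List Bool) (hlen : s.length = t.length)
    (hcount : s.count true = t.count true) :
    IsLeast {m : ℕ | ∃ f : ℕ → List Bool,
        f 0 = s ∧ f m = t ∧ ∀ i < m, SwapStep (f i) (f (i + 1))}
      ((((onePositions s).zip (onePositions t)).map
          (fun x => ((x.1 : ℤ) - (x.2 : ℤ)).natAbs)).sum) :=
  ⟨swapsTo_l1Dist_onePositions hlen hcount, fun _ => l1Dist_onePositions_le_of_swapsTo⟩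
end

section
/- The flip distance between the left-inclined and right-inclined triangulations of a channel with chains of length n+1 (so n edges per chain) is at least n^2. For n = 6 this gives a lower bound of 36 flips. -/
/-!
Take as potential the sum of the apexes of the upper-edge triangles minus the sum of the apexes
of the lower-edge triangles. A flip moves one apex of each kind by one position, so it changes
the potential by at most `2`, while the potential drops from `n * n` on the left-inclined
triangulation to `-(n * n)` on the right-inclined one.
-/

/-- State of a triangulation of a channel with `n` edges per chain: the apex
(a vertex of the opposite chain, among `n + 1` vertices) of the triangle based
on each upper-chain edge and on each lower-chain edge.  A flip changes the apex
of exactly one upper-edge triangle and one lower-edge triangle, each by one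
position along the opposite chain. -/
def ChannelFlip (n : ℕ) (s t : (Fin n → Fin (n + 1)) × (Fin n → Fin (n + 1))) : Prop :=
  ∃ i j : Fin n,
    (∀ i', i' ≠ i → s.1 i' = t.1 i') ∧
    (∀ j', j' ≠ j → s.2 j' = t.2 j') ∧
    ((t.1 i : ℤ) - (s.1 i : ℤ)).natAbs = 1 ∧
    ((t.2 j : ℤ) - (s.2 j : ℤ)).natAbs = 1

open Finset

def channelPotential (n : ℕ) (s : (Fin n → Fin (n + 1)) × (Fin n → Fin (n + 1))) : ℤ :=
  ∑ i, (s.1 i : ℤ) - ∑ j, (s.2 j : ℤ)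

lemma Fintype.sum_sub_sum_eq_of_eq_off {ι G : Type*} [Fintype ι] [DecidableEq ι]
    [AddCommGroup G] {g h : ι → G} (i : ι) (hgh : ∀ i', i' ≠ i → g i' = h i') :
    ∑ i', g i' - ∑ i', h i' = g i - h i := by
  rw [← Finset.sum_sub_distrib]
  exact Fintype.sum_eq_single i fun i' hi' => sub_eq_zero.mpr (hgh i' hi')

lemma abs_channelPotential_sub_le_two {n : ℕ}
    {s t : (Fin n → Fin (n + 1)) × (Fin n → Fin (n + 1))} (h : ChannelFlip n s t) :
    |channelPotential n t - channelPotential n s| ≤ 2 := by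
  obtain ⟨i, j, hi, hj, hi_move, hj_move⟩ := h
  have hupper := Fintype.sum_sub_sum_eq_of_eq_off (g := fun i' => (t.1 i' : ℤ))
    (h := fun i' => (s.1 i' : ℤ)) i fun i' hi' => by simp [hi i' hi']
  have hlower := Fintype.sum_sub_sum_eq_of_eq_off (g := fun j' => (t.2 j' : ℤ))
    (h := fun j' => (s.2 j' : ℤ)) j fun j' hj' => by simp [hj j' hj']
  have hdiff : channelPotential n t - channelPotential n s
      = ((t.1 i : ℤ) - s.1 i) - ((t.2 j : ℤ) - s.2 j) := by
    unfold channelPotential; linear_combination hupper - hlower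
  calc |channelPotential n t - channelPotential n s|
      ≤ |(t.1 i : ℤ) - s.1 i| + |(t.2 j : ℤ) - s.2 j| := hdiff ▸ abs_sub _ _
    _ = 2 := by rw [Int.abs_eq_natAbs, Int.abs_eq_natAbs, hi_move, hj_move]; rfl

lemma sub_le_nsmul_of_forall_sub_succ_le {G : Type*} [AddCommGroup G] [PartialOrder G]
    [IsOrderedAddMonoid G] (φ : ℕ → G) (c : G) (m : ℕ) (h : ∀ k < m, φ k - φ (k + 1) ≤ c) :
    φ 0 - φ m ≤ m • c := by
  rw [← Finset.sum_range_sub']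
  simpa using Finset.sum_le_card_nsmul (range m) _ c fun k hk => h k (mem_range.mp hk)

lemma channelPotential_left (n : ℕ) :
    channelPotential n (fun _ => Fin.last n, fun _ => 0) = n * n := by
  simp [channelPotential]

lemma channelPotential_right (n : ℕ) :
    channelPotential n (fun _ => 0, fun _ => Fin.last n) = -(n * n) := by
  simp [channelPotential]

/-- The flip distance between the left-inclined triangulation (all upper apexes
at the last lower vertex, all lower apexes at the first upper vertex) and the
right-inclined triangulation (the mirror image) of a channel with `n` edges per
chain is at least `n ^ 2` (36 for `n = 6`). -/
theorem stmt4 (n m : ℕ)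
    (f : ℕ → (Fin n → Fin (n + 1)) × (Fin n → Fin (n + 1)))
    (h0 : f 0 = (fun _ => Fin.last n, fun _ => 0))
    (hm : f m = (fun _ => 0, fun _ => Fin.last n))
    (hstep : ∀ i < m, ChannelFlip n (f i) (f (i + 1))) :
    n ^ 2 ≤ m := by
  have hdrop := sub_le_nsmul_of_forall_sub_succ_le (fun k => channelPotential n (f k)) 2 m
    fun k hk => (le_abs_self _).trans <|
      abs_sub_comm (channelPotential n (f k)) _ ▸ abs_channelPotential_sub_le_two (hstep k hk)
  simp only [h0, hm, channelPotential_left, channelPotential_right, nsmul_eq_mul] at hdrop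
  have : ((n ^ 2 : ℕ) : ℤ) ≤ m := by push_cast; linarith
  exact_mod_cast this
end

section
/- Abstract model of the capped channel: suppose 2n tokens must each move from a start position to an end position, where a direct route costs n unit moves per token, but a token may alternatively take a shortcut costing 2 special operations; each regular operation advances two tokens (one of each type) by one unit, and each special operation serves one token. Then the minimum total number of operations is 2·2n when all tokens use shortcuts, i.e., 24 operations when n = 6. -/
/-! Sending a pair of tokens (one of each type) through the cap costs `2 + 2 = 4` special
operations, while the direct route of that pair costs `n ≥ 4` regular operations; so sending
every token through the cap is optimal. -/

def channelCost (n kU kL : ℕ) : ℕ :=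
  2 * (kU + kL) + n * max (n - kU) (n - kL)

lemma channelCost_self (n : ℕ) : channelCost n n n = 2 * (2 * n) := by
  simp only [channelCost, Nat.sub_self, max_self, mul_zero, add_zero]
  ring

lemma two_mul_two_mul_le_channelCost {n : ℕ} (hn : 4 ≤ n) (kU kL : ℕ) :
    2 * (2 * n) ≤ channelCost n kU kL := by
  have hregular : 4 * max (n - kU) (n - kL) ≤ n * max (n - kU) (n - kL) :=
    Nat.mul_le_mul_right _ hn
  unfold channelCost
  omega

/-- Abstract model of the capped channel: of the `n` tokens of each of the two
types, `kU` (resp. `kL`) take the shortcut, at a cost of 2 special operations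
per token; the remaining tokens each need `n` unit moves, and each regular
operation advances one remaining token of each type by one unit, so the
regular operations number at least `n * max (n - kU) (n - kL)` (and this is
attainable).  For `n ≥ 4`, the minimum total number of operations is
`2 * (2 * n)` (i.e. 24 when `n = 6`), attained when all tokens use shortcuts. -/
theorem stmt6 (n : ℕ) (hn : 4 ≤ n) :
    IsLeast {c : ℕ | ∃ kU kL : ℕ, kU ≤ n ∧ kL ≤ n ∧
        c = 2 * (kU + kL) + n * max (n - kU) (n - kL)}
      (2 * (2 * n)) := by
  refine ⟨⟨n, n, le_rfl, le_rfl, (channelCost_self n).symm⟩, ?_⟩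
  rintro c ⟨kU, kL, -, -, rfl⟩
  exact two_mul_two_mul_le_channelCost hn kU kL
end

section
/- In the capped-channel flip model, any flip sequence transforming the left-inclined to the right-inclined triangulation has length at least 24: each of the 12 triangles either requires at least 2 type-1 flips (via the cap) or contributes at least 3 type-2 flips (moving its apex 6 positions at one position per flip, two apexes per flip). -/
/-! Charge every type-1 flip to the triangle whose apex it moves and split every type-2 flip
evenly between its two triangles. A triangle using the cap receives at least `2`, any other
at least `6 / 2 = 3`, so the twelve triangles receive at least `24` in total, which is at most
the number of flips. -/

lemma mul_le_add_mul_of_le_or_le {a b x y : ℕ} (h : a ≤ x ∨ b ≤ y) :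
    a * b ≤ b * x + a * y := by
  rcases h with h | h
  · calc a * b = b * a := Nat.mul_comm a b
      _ ≤ b * x := Nat.mul_le_mul_left b h
      _ ≤ b * x + a * y := Nat.le_add_right _ _
  · calc a * b ≤ a * y := Nat.mul_le_mul_left a h
      _ ≤ b * x + a * y := Nat.le_add_left _ _

lemma Finset.card_mul_le_sum_of_le_or_le {ι : Type*} (s : Finset ι) {f g : ι → ℕ} {a b : ℕ}
    (h : ∀ i ∈ s, a ≤ f i ∨ b ≤ g i) :
    s.card * (a * b) ≤ b * ∑ i ∈ s, f i + a * ∑ i ∈ s, g i := by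
  rw [Finset.mul_sum, Finset.mul_sum, ← Finset.sum_add_distrib, ← smul_eq_mul,
    ← Finset.sum_const]
  exact Finset.sum_le_sum fun i hi => mul_le_add_mul_of_le_or_le (h i hi)

/-- Capped-channel flip model: there are 12 triangles.  For triangle `i`,
`f1 i` is the number of type-1 flips (moving only that triangle's apex, via
the cap) applied to it, and `f2 i` is the number of type-2 flips moving its
apex along the opposite chain.  Each triangle either uses the cap, requiring
at least 2 type-1 flips, or has its apex moved through 6 positions at one
position per type-2 flip, so `f2 i ≥ 6`.  A type-2 flip moves the apexes of
exactly two triangles, so if `m` is the number of type-2 flips then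
`∑ i, f2 i ≤ 2 * m`, and the total number of flips is `N = ∑ i, f1 i + m`.
Then `N ≥ 24`. -/
theorem stmt7 (N m : ℕ) (f1 f2 : Fin 12 → ℕ)
    (hchoice : ∀ i, 2 ≤ f1 i ∨ 6 ≤ f2 i)
    (htotal : N = (∑ i, f1 i) + m)
    (htype2 : ∑ i, f2 i ≤ 2 * m) :
    24 ≤ N := by
  have hcharge : 12 * (2 * 6) ≤ 6 * ∑ i, f1 i + 2 * ∑ i, f2 i := by
    simpa using Finset.univ.card_mul_le_sum_of_le_or_le fun i _ => hchoice i
  omega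
end

section
/- Let G = (V,E) be a graph with cost model: a flip sequence is determined by a set L ⊆ V of unlocked vertices, with cost at least 2|L| + 36|C_L| + 28|E \ C_L|, where C_L is the set of edges of E not covered by L. If G has a vertex cover of size k, then there is a choice of L with cost exactly 2k + 28|E|; conversely, if some L achieves cost at most 2k + 28|E|, then G has a vertex cover of size at most k. Hence the minimum cost is 2·τ(G) + 28|E|, where τ(G) is the minimum vertex cover size. -/
/-!
Rewriting `36|C_L| + 28|E \ C_L|` as `8|C_L| + 28|E|`, the cost is `2|L| + 8|C_L| + 28|E|`.
A vertex cover leaves no edge uncovered, so its cost is `2|L| + 28|E|`. Conversely, adding one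
endpoint of every uncovered edge turns any `L` into a vertex cover of size at most
`|L| + |C_L|`, whose cost `2|L| + 2|C_L| + 28|E|` does not exceed that of `L`.
-/

/-- `S` is a vertex cover of `G`. -/
def IsVertexCover {V : Type*} (G : SimpleGraph V) (S : Finset V) : Prop :=
  ∀ e ∈ G.edgeSet, ∃ v ∈ S, v ∈ e

/-- The number of edges of `G` with neither endpoint in `L` (the uncovered
channels `C_L`). -/
noncomputable def uncov {V : Type*} (G : SimpleGraph V) (L : Finset V) : ℕ :=
  {e ∈ G.edgeSet | ∀ v ∈ e, v ∉ L}.ncard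

/-- The cost of the flip strategy determined by unlocking `L`:
`2|L| + 36|C_L| + 28|E \ C_L|`. -/
noncomputable def flipCost {V : Type*} (G : SimpleGraph V) (L : Finset V) : ℕ :=
  2 * L.card + 36 * uncov G L + 28 * (G.edgeSet.ncard - uncov G L)

section VertexCover

variable {V : Type*} (G : SimpleGraph V)

theorem isVertexCover_univ [Fintype V] : IsVertexCover G Finset.univ :=
  fun e _ => ⟨e.out.1, Finset.mem_univ _, Sym2.out_fst_mem e⟩

theorem uncov_le_ncard_edgeSet [Finite V] (L : Finset V) : uncov G L ≤ G.edgeSet.ncard :=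
  Set.ncard_le_ncard (fun _ he => he.1) (Set.toFinite _)

theorem flipCost_eq [Finite V] (L : Finset V) :
    flipCost G L = 2 * L.card + 8 * uncov G L + 28 * G.edgeSet.ncard := by
  have := uncov_le_ncard_edgeSet G L
  rw [flipCost]
  omega

variable {G}

theorem IsVertexCover.uncov_eq_zero {L : Finset V} (hL : IsVertexCover G L) :
    uncov G L = 0 := by
  suffices h : {e ∈ G.edgeSet | ∀ v ∈ e, v ∉ L} = ∅ by rw [uncov, h, Set.ncard_empty]
  refine Set.eq_empty_of_forall_notMem fun e ⟨he, hnot⟩ => ?_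
  obtain ⟨v, hvL, hve⟩ := hL e he
  exact hnot v hve hvL

theorem IsVertexCover.flipCost_eq [Finite V] {L : Finset V} (hL : IsVertexCover G L) :
    flipCost G L = 2 * L.card + 28 * G.edgeSet.ncard := by
  rw [_root_.flipCost_eq, hL.uncov_eq_zero, mul_zero, add_zero]

variable (G)

theorem exists_isVertexCover_card_le [Finite V] [DecidableEq V] (L : Finset V) :
    ∃ S : Finset V, IsVertexCover G S ∧ S.card ≤ L.card + uncov G L := by
  set U : Set (Sym2 V) := {e ∈ G.edgeSet | ∀ v ∈ e, v ∉ L}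
  have hU : U.Finite := Set.toFinite U
  refine ⟨L ∪ hU.toFinset.image fun e => e.out.1, fun e he => ?_, ?_⟩
  · by_cases hcov : ∃ v ∈ L, v ∈ e
    · obtain ⟨v, hvL, hve⟩ := hcov
      exact ⟨v, Finset.mem_union_left _ hvL, hve⟩
    · have heU : e ∈ hU.toFinset :=
        hU.mem_toFinset.2 ⟨he, fun v hve hvL => hcov ⟨v, hvL, hve⟩⟩
      exact ⟨e.out.1, Finset.mem_union_right _ (Finset.mem_image_of_mem _ heU),
        Sym2.out_fst_mem e⟩
  · calc (L ∪ hU.toFinset.image fun e => e.out.1).card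
        ≤ L.card + (hU.toFinset.image fun e => e.out.1).card := Finset.card_union_le _ _
      _ ≤ L.card + hU.toFinset.card := by gcongr; exact Finset.card_image_le
      _ = L.card + uncov G L := by rw [uncov, Set.ncard_eq_toFinset_card U hU]

theorem exists_isVertexCover_cost_le_flipCost [Finite V] [DecidableEq V] (L : Finset V) :
    ∃ S : Finset V, IsVertexCover G S ∧ 2 * S.card + 28 * G.edgeSet.ncard ≤ flipCost G L := by
  obtain ⟨S, hS, hcard⟩ := exists_isVertexCover_card_le G L
  exact ⟨S, hS, by rw [flipCost_eq]; omega⟩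

end VertexCover

/-- Cost correspondence of the main reduction lemma: a vertex cover of size `k`
yields an `L` of cost exactly `2k + 28|E|`; conversely a choice of `L` of cost
at most `2k + 28|E|` yields a vertex cover of size at most `k`; and the
minimum cost equals `2·τ(G) + 28|E|` where `τ(G)` is the minimum vertex cover
size. -/
theorem stmt10 {V : Type*} [Fintype V] [DecidableEq V] (G : SimpleGraph V)
    (k : ℕ) :
    ((∃ S : Finset V, IsVertexCover G S ∧ S.card = k) →
        ∃ L : Finset V, flipCost G L = 2 * k + 28 * G.edgeSet.ncard) ∧
    ((∃ L : Finset V, flipCost G L ≤ 2 * k + 28 * G.edgeSet.ncard) →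
        ∃ S : Finset V, IsVertexCover G S ∧ S.card ≤ k) ∧
    IsLeast {c : ℕ | ∃ L : Finset V, c = flipCost G L}
      (2 * sInf {m : ℕ | ∃ S : Finset V, IsVertexCover G S ∧ S.card = m} +
        28 * G.edgeSet.ncard) := by
  set coverSizes := {m : ℕ | ∃ S : Finset V, IsVertexCover G S ∧ S.card = m}
  refine ⟨?_, ?_, ?_, ?_⟩
  · rintro ⟨S, hS, rfl⟩
    exact ⟨S, hS.flipCost_eq⟩
  · rintro ⟨L, hL⟩
    obtain ⟨S, hS, hcost⟩ := exists_isVertexCover_cost_le_flipCost G L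
    exact ⟨S, hS, by omega⟩
  · obtain ⟨S, hS, hcard⟩ :=
      Nat.sInf_mem (s := coverSizes) ⟨_, Finset.univ, isVertexCover_univ G, rfl⟩
    exact ⟨S, by rw [hS.flipCost_eq, hcard]⟩
  · rintro c ⟨L, rfl⟩
    obtain ⟨S, hS, hcost⟩ := exists_isVertexCover_cost_le_flipCost G L
    have hmin := Nat.sInf_le (s := coverSizes) ⟨S, hS, rfl⟩
    omega
end

section
/- Let G be a graph, v a vertex of G, and construct G' by replacing v with a path v_1, v_2, v_3, where v_1 and v_3 split the edges formerly incident to v. Applying this replacement to each of t designated vertices, the resulting graph has a vertex cover of size at most k + t if and only if G has a vertex cover of size at most k. -/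
/-- The replacement relation: each designated vertex `w ∈ W` is replaced by a
path `v₁, v₂, v₃` (encoded `(w, 0), (w, 1), (w, 2)`), the designated vertices
themselves become isolated, and each edge formerly incident to `w` attaches to
exactly one of `v₁, v₃`, as prescribed by the attachment choice `a` (for an
edge `{u, w}`, `a w u = true` means attach to `v₁`, else to `v₃`). -/
def ReplaceRel {V : Type*} [DecidableEq V] (G : SimpleGraph V) (W : Finset V)
    (a : V → V → Bool) :
    (V ⊕ (↥W × Fin 3)) → (V ⊕ (↥W × Fin 3)) → Prop
  | Sum.inl u, Sum.inl u' => G.Adj u u' ∧ u ∉ W ∧ u' ∉ W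
  | Sum.inl u, Sum.inr (w, i) =>
      u ∉ W ∧ G.Adj u w ∧ i = (if a (w : V) u then 0 else 2)
  | Sum.inr _, Sum.inl _ => False
  | Sum.inr (w, i), Sum.inr (w', j) =>
      ((w : V) = (w' : V) ∧ ((i = 0 ∧ j = 1) ∨ (i = 1 ∧ j = 2))) ∨
      ((w : V) ≠ (w' : V) ∧ G.Adj w w' ∧
        i = (if a (w : V) w' then 0 else 2) ∧
        j = (if a (w' : V) w then 0 else 2))

/-- The graph obtained from `G` by replacing each designated vertex `w ∈ W` by
a three-vertex path, distributing the former edges of `w` among the two path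
endpoints according to `a`. -/
def ReplaceGraph {V : Type*} [DecidableEq V] (G : SimpleGraph V) (W : Finset V)
    (a : V → V → Bool) : SimpleGraph (V ⊕ (↥W × Fin 3)) :=
  SimpleGraph.fromRel (ReplaceRel G W a)

open Finset

theorem Finset.card_eq_sum_card_slices {α β : Type*} [Fintype α] [Fintype β] [DecidableEq α]
    [DecidableEq β] (T : Finset (α × β)) : #T = ∑ a, #{b | (a, b) ∈ T} := by
  simp only [card_filter]
  rw [← Fintype.sum_prod_type (f := fun p => if p ∈ T then 1 else 0), ← card_filter]
  simp

theorem isVertexCover_iff_adj {V : Type*} (G : SimpleGraph V) (S : Finset V) :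
    IsVertexCover G S ↔ ∀ u v, G.Adj u v → u ∈ S ∨ v ∈ S := by
  refine ⟨fun h u v huv => ?_, fun h e he => ?_⟩
  · obtain ⟨x, hx, hxe⟩ := h _ ((G.mem_edgeSet).2 huv)
    rcases Sym2.mem_iff.1 hxe with rfl | rfl
    exacts [Or.inl hx, Or.inr hx]
  · induction e using Sym2.ind with
    | h u v =>
      rcases h u v he with hu | hv
      exacts [⟨u, hu, Sym2.mem_mk_left u v⟩, ⟨v, hv, Sym2.mem_mk_right u v⟩]

theorem one_add_ite_le_card_of_covers_path_three (s : Finset (Fin 3)) (h₀₁ : 0 ∈ s ∨ 1 ∈ s)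
    (h₁₂ : 1 ∈ s ∨ 2 ∈ s) : 1 + (if 0 ∈ s ∨ 2 ∈ s then 1 else 0) ≤ #s := by
  revert s; decide

namespace ReplaceGraph

variable {V : Type*} [DecidableEq V] (G : SimpleGraph V) (W : Finset V) (a : V → V → Bool)

-- The vertex at which the edge `{u, u'}` of `G` arrives on the side of `u`.
def port (u u' : V) : V ⊕ (↥W × Fin 3) :=
  if h : u ∈ W then Sum.inr (⟨u, h⟩, if a u u' then 0 else 2) else Sum.inl u

variable {G W a}

theorem adj_port {u u' : V} (h : G.Adj u u') :
    (ReplaceGraph G W a).Adj (port W a u u') (port W a u' u) := by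
  rw [ReplaceGraph, SimpleGraph.fromRel_adj]
  unfold port
  split_ifs <;> simp [ReplaceRel, *, h.ne, h.ne', h.symm]

theorem adj_zero_one (w : ↥W) :
    (ReplaceGraph G W a).Adj (Sum.inr (w, 0)) (Sum.inr (w, 1)) := by
  simp [ReplaceGraph, ReplaceRel]

theorem adj_one_two (w : ↥W) :
    (ReplaceGraph G W a).Adj (Sum.inr (w, 1)) (Sum.inr (w, 2)) := by
  simp [ReplaceGraph, ReplaceRel]

theorem replaceRel_cases {x y : V ⊕ (↥W × Fin 3)} (h : ReplaceRel G W a x y) :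
    (∃ w i j, x = Sum.inr (w, i) ∧ y = Sum.inr (w, j) ∧ (i = 0 ∧ j = 1 ∨ i = 1 ∧ j = 2)) ∨
      ∃ u u', G.Adj u u' ∧ x = port W a u u' ∧ y = port W a u' u := by
  rcases x with u | ⟨w, i⟩ <;> rcases y with u' | ⟨w', j⟩
  · obtain ⟨hadj, hu, hu'⟩ := h
    exact Or.inr ⟨u, u', hadj, by simp [port, hu], by simp [port, hu']⟩
  · obtain ⟨hu, hadj, rfl⟩ := h
    exact Or.inr ⟨u, w', hadj, by simp [port, hu], by simp [port, w'.2]⟩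
  · exact h.elim
  · rcases h with ⟨hww', hij⟩ | ⟨-, hadj, rfl, rfl⟩
    · obtain rfl : w = w' := Subtype.ext hww'
      exact Or.inl ⟨w, i, j, rfl, rfl, hij⟩
    · exact Or.inr ⟨w, w', hadj, by simp [port, w.2], by simp [port, w'.2]⟩

variable (W) in
def pathPart (S' : Finset (V ⊕ (↥W × Fin 3))) (w : ↥W) : Finset (Fin 3) :=
  {i | (w, i) ∈ S'.toRight}

variable (W) in
def projectCover (S' : Finset (V ⊕ (↥W × Fin 3))) : Finset V :=
  {u ∈ S'.toLeft | u ∉ W} ∪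
    ({w : ↥W | 0 ∈ pathPart W S' w ∨ 2 ∈ pathPart W S' w} : Finset ↥W).image Subtype.val

theorem mem_projectCover_of_port_mem {S' : Finset (V ⊕ (↥W × Fin 3))} {u u' : V}
    (h : port W a u u' ∈ S') : u ∈ projectCover W S' := by
  unfold port at h
  split_ifs at h with hu <;> simp [projectCover, pathPart, hu, h]

theorem isVertexCover_projectCover {S' : Finset (V ⊕ (↥W × Fin 3))}
    (h : IsVertexCover (ReplaceGraph G W a) S') : IsVertexCover G (projectCover W S') := by
  rw [isVertexCover_iff_adj] at h ⊢
  intro u u' huu'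
  exact (h _ _ (adj_port huu')).imp mem_projectCover_of_port_mem mem_projectCover_of_port_mem

theorem card_projectCover_add_card_le {S' : Finset (V ⊕ (↥W × Fin 3))}
    (h : IsVertexCover (ReplaceGraph G W a) S') : #(projectCover W S') + #W ≤ #S' := by
  rw [isVertexCover_iff_adj] at h
  set P : ↥W → Prop := fun w => 0 ∈ pathPart W S' w ∨ 2 ∈ pathPart W S' w
  have hproj : #(projectCover W S') ≤ #S'.toLeft + #{w | P w} :=
    (card_union_le _ _).trans (add_le_add (card_filter_le _ _) card_image_le)
  have hpath (w : ↥W) : 1 + (if P w then 1 else 0) ≤ #(pathPart W S' w) := by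
    apply one_add_ite_le_card_of_covers_path_three
    · simpa [pathPart] using h _ _ (adj_zero_one (a := a) w)
    · simpa [pathPart] using h _ _ (adj_one_two (a := a) w)
  calc #(projectCover W S') + #W
      ≤ #S'.toLeft + (#W + #{w | P w}) := by omega
    _ = #S'.toLeft + ∑ w, (1 + if P w then 1 else 0) := by simp [sum_add_distrib, sum_boole]
    _ ≤ #S'.toLeft + #S'.toRight := by
        rw [card_eq_sum_card_slices S'.toRight]
        exact Nat.add_le_add_left (sum_le_sum fun w _ => hpath w) _
    _ = #S' := card_toLeft_add_card_toRight

variable (W) in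
def liftCover (S : Finset V) : Finset (V ⊕ (↥W × Fin 3)) :=
  ({u ∈ S | u ∉ W} : Finset V).disjSum {p : ↥W × Fin 3 | p.2 = 1 ↔ (p.1 : V) ∉ S}

theorem port_mem_liftCover_iff {S : Finset V} {u u' : V} :
    port W a u u' ∈ liftCover W S ↔ u ∈ S := by
  unfold port
  split_ifs with hu hau <;> simp [liftCover, hu]

theorem isVertexCover_liftCover {S : Finset V} (h : IsVertexCover G S) :
    IsVertexCover (ReplaceGraph G W a) (liftCover W S) := by
  rw [isVertexCover_iff_adj] at h ⊢
  have hrel {x y} (hxy : ReplaceRel G W a x y) : x ∈ liftCover W S ∨ y ∈ liftCover W S := by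
    rcases replaceRel_cases hxy with ⟨w, i, j, rfl, rfl, hij⟩ | ⟨u, u', huu', rfl, rfl⟩
    · by_cases hw : (w : V) ∈ S <;> rcases hij with ⟨rfl, rfl⟩ | ⟨rfl, rfl⟩ <;>
        simp [liftCover, hw]
    · simpa only [port_mem_liftCover_iff] using h u u' huu'
  intro x y hxy
  rw [ReplaceGraph, SimpleGraph.fromRel_adj] at hxy
  exact hxy.2.elim hrel fun hyx => (hrel hyx).symm

variable (W) in
theorem card_liftCover_le (S : Finset V) : #(liftCover W S) ≤ #S + #W := by
  have hmid : #{w : ↥W | (w : V) ∈ S} ≤ #{u ∈ S | u ∈ W} :=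
    card_le_card_of_injOn Subtype.val (fun w hw => by simpa using hw) Subtype.val_injective.injOn
  have hslice (w : ↥W) :
      #{i : Fin 3 | i = 1 ↔ (w : V) ∉ S} = 1 + if (w : V) ∈ S then 1 else 0 := by
    by_cases hw : (w : V) ∈ S <;> simp [hw] <;> decide
  calc #(liftCover W S)
      = #{u ∈ S | u ∉ W} + ∑ w : ↥W, (1 + if (w : V) ∈ S then 1 else 0) := by
        simp only [liftCover, card_disjSum, card_eq_sum_card_slices (_ : Finset (↥W × Fin 3))]
        simp [hslice]
    _ = #{u ∈ S | u ∉ W} + (#W + #{w : ↥W | (w : V) ∈ S}) := by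
        simp [sum_add_distrib, sum_boole]
    _ ≤ #S + #W := by
        have := card_filter_add_card_filter_not (s := S) (· ∈ W)
        omega

end ReplaceGraph

/-- Replacing each of the `t = |W|` designated vertices of `G` by a
three-vertex path: the resulting graph has a vertex cover of size at most
`k + t` if and only if `G` has a vertex cover of size at most `k`. -/
theorem stmt11 {V : Type*} [DecidableEq V] (G : SimpleGraph V) (W : Finset V)
    (a : V → V → Bool) (k : ℕ) :
    (∃ S' : Finset (V ⊕ (↥W × Fin 3)),
        IsVertexCover (ReplaceGraph G W a) S' ∧ S'.card ≤ k + W.card) ↔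
    (∃ S : Finset V, IsVertexCover G S ∧ S.card ≤ k) := by
  constructor
  · rintro ⟨S', hS', hcard⟩
    have := ReplaceGraph.card_projectCover_add_card_le hS'
    exact ⟨_, ReplaceGraph.isVertexCover_projectCover hS', by omega⟩
  · rintro ⟨S, hS, hcard⟩
    have := ReplaceGraph.card_liftCover_le W S
    exact ⟨_, ReplaceGraph.isVertexCover_liftCover (a := a) hS, by omega⟩
end

section
/- In any triangulation of a convex polygon with n ≥ 4 vertices and any vertex v, if the degree of v (number of diagonals plus polygon edges at v) is less than n − 1, then there exists a flip that increases the degree of v by one. -/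
/-- Two chords of a convex polygon cross iff their endpoints interleave. -/
def Crosses {m : ℕ} (e f : Sym2 (Fin m)) : Prop :=
  ∃ a b c d : Fin m, a < b ∧ b < c ∧ c < d ∧
    ((e = s(a, c) ∧ f = s(b, d)) ∨ (e = s(b, d) ∧ f = s(a, c)))

/-- A triangulation of a convex polygon with `m` vertices: a set of `m - 3`
pairwise non-crossing diagonals. -/
def IsPolygonTriangulation (m : ℕ) (T : Finset (Sym2 (Fin m))) : Prop :=
  (∀ e ∈ T, ∃ a b : Fin m, e = s(a, b) ∧ (a : ℕ) + 2 ≤ (b : ℕ) ∧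
      ¬((a : ℕ) = 0 ∧ (b : ℕ) = m - 1)) ∧
  (∀ e ∈ T, ∀ f ∈ T, ¬ Crosses e f) ∧
  T.card = m - 3

/-!
Renumber the vertices cyclically so that `v` becomes `0`. A chord `v z` then crosses a diagonal
not at `v` exactly when `z` lies strictly inside the interval of positions spanned by that
diagonal, and non-crossing diagonals span a laminar family of intervals. Inside an interval `e`
of such a family there is an "apex": a point strictly inside no smaller member (an endpoint of a
longest member properly inside `e`). Apexes give an injection of the family, together with the
whole polygon, into the interior points, so a triangulation is a maximal non-crossing set of
diagonals. Hence, if `v` misses some diagonal `v z₀`, then `v z₀` crosses a diagonal of `T`;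
the apex `x` of a longest diagonal crossed by `v z₀` lies inside that diagonal `e` only, and
flipping `e` to `v x` gives a triangulation with one more diagonal at `v`.
-/

def IntervalsCross (p q : ℕ × ℕ) : Prop :=
  p.1 < q.1 ∧ q.1 < p.2 ∧ p.2 < q.2 ∨ q.1 < p.1 ∧ p.1 < q.2 ∧ q.2 < p.2

section Laminar

variable {S : Finset (ℕ × ℕ)}

/-- When `S ∪ {e}` comes from a triangulation, `x` is the apex of the triangle that lies
inside `e` and has `e` as a side. -/
lemma exists_apex (hS : ∀ p ∈ S, p.1 < p.2) (hSS : ∀ p ∈ S, ∀ q ∈ S, ¬ IntervalsCross p q)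
    (e : ℕ × ℕ) (he : e.1 + 2 ≤ e.2) :
    ∃ x, e.1 < x ∧ x < e.2 ∧
      ∀ p ∈ S, p ≠ e → e.1 ≤ p.1 → p.2 ≤ e.2 → ¬ (p.1 < x ∧ x < p.2) := by
  classical
  set C := S.filter (fun p => p ≠ e ∧ e.1 ≤ p.1 ∧ p.2 ≤ e.2)
  rcases C.eq_empty_or_nonempty with hC | hC
  · refine ⟨e.1 + 1, by omega, by omega, fun p hp hpe h1 h2 _ => ?_⟩
    exact Finset.eq_empty_iff_forall_notMem.mp hC p (Finset.mem_filter.mpr ⟨hp, hpe, h1, h2⟩)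
  -- an apex is an endpoint of a longest proper sub-interval `c`: a sub-interval strictly
  -- containing that endpoint would contain `c` and be longer
  obtain ⟨c, hcC, hcmax⟩ := C.exists_max_image (fun p => p.2 - p.1) hC
  obtain ⟨hcS, hce, hc1, hc2⟩ := Finset.mem_filter.mp hcC
  have hc := hS c hcS
  have longest : ∀ p ∈ S, p ≠ e → e.1 ≤ p.1 → p.2 ≤ e.2 → p.2 - p.1 ≤ c.2 - c.1 :=
    fun p hp hpe h1 h2 => hcmax p (Finset.mem_filter.mpr ⟨hp, hpe, h1, h2⟩)
  by_cases hlo : e.1 < c.1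
  · refine ⟨c.1, hlo, by omega, fun p hp hpe h1 h2 hx => ?_⟩
    have := longest p hp hpe h1 h2
    have := hSS p hp c hcS
    unfold IntervalsCross at this
    omega
  · have : c.2 ≠ e.2 := fun h => hce (Prod.ext (by omega) h)
    refine ⟨c.2, by omega, by omega, fun p hp hpe h1 h2 hx => ?_⟩
    have := longest p hp hpe h1 h2
    have := hSS p hp c hcS
    unfold IntervalsCross at this
    omega

lemma exists_unique_interval_containing (hS : ∀ p ∈ S, p.1 < p.2)
    (hSS : ∀ p ∈ S, ∀ q ∈ S, ¬ IntervalsCross p q) {e₀ : ℕ × ℕ} (he₀ : e₀ ∈ S) {x₀ : ℕ}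
    (hx₀ : e₀.1 < x₀ ∧ x₀ < e₀.2) :
    ∃ x, ∃ e ∈ S, e.1 < x ∧ x < e.2 ∧ ∀ p ∈ S, p.1 < x → x < p.2 → p = e := by
  classical
  obtain ⟨e, heC, hemax⟩ := (S.filter (fun p => p.1 < x₀ ∧ x₀ < p.2)).exists_max_image
    (fun p => p.2 - p.1) ⟨e₀, Finset.mem_filter.mpr ⟨he₀, hx₀⟩⟩
  obtain ⟨he, hex₀⟩ := Finset.mem_filter.mp heC
  obtain ⟨x, hx1, hx2, hapex⟩ := exists_apex hS hSS e (by omega)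
  refine ⟨x, e, he, hx1, hx2, fun p hp h1 h2 => ?_⟩
  have hpe := hSS p hp e he
  unfold IntervalsCross at hpe
  by_contra hne
  by_cases hsub : e.1 ≤ p.1 ∧ p.2 ≤ e.2
  · exact hapex p hp hne hsub.1 hsub.2 ⟨h1, h2⟩
  · have := hemax p (Finset.mem_filter.mpr ⟨hp, by omega, by omega⟩)
    exact hne (Prod.ext (by omega) (by omega))

/-- Apexes map `S ∪ {[0, m - 1]}` injectively to the `m - 2` interior points. -/
lemma card_le_of_pairwise_not_intervalsCross (m : ℕ)
    (hS : ∀ p ∈ S, p.1 + 2 ≤ p.2 ∧ p.2 < m ∧ p ≠ (0, m - 1))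
    (hSS : ∀ p ∈ S, ∀ q ∈ S, ¬ IntervalsCross p q) : S.card ≤ m - 3 := by
  classical
  rcases S.eq_empty_or_nonempty with rfl | ⟨p₀, hp₀⟩
  · simp
  have hm := hS p₀ hp₀
  set S' := insert (0, m - 1) S
  have hS' : ∀ p ∈ S', p.1 + 2 ≤ p.2 ∧ p.2 < m := by
    intro p hp
    rcases Finset.mem_insert.mp hp with rfl | hp
    · dsimp only; omega
    · exact ⟨(hS p hp).1, (hS p hp).2.1⟩
  have hSS' : ∀ p ∈ S', ∀ q ∈ S', ¬ IntervalsCross p q := by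
    intro p hp q hq
    have := hS' p hp
    have := hS' q hq
    rcases Finset.mem_insert.mp hp with rfl | hp <;> rcases Finset.mem_insert.mp hq with rfl | hq
    all_goals first | exact hSS p hp q hq | (unfold IntervalsCross; dsimp only; omega)
  choose! apex hapex using
    fun e (he : e ∈ S') => exists_apex (fun p hp => by have := hS' p hp; omega) hSS' e (hS' e he).1
  have hinj : Set.InjOn apex S' := by
    intro e he f hf hef
    obtain ⟨he1, he2, he3⟩ := hapex e he
    obtain ⟨hf1, hf2, hf3⟩ := hapex f hf
    rw [hef] at he1 he2 he3
    have := hSS' e he f hf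
    unfold IntervalsCross at this
    by_contra hne
    have nested : e.1 ≤ f.1 ∧ f.2 ≤ e.2 ∨ f.1 ≤ e.1 ∧ e.2 ≤ f.2 := by omega
    rcases nested with ⟨h1, h2⟩ | ⟨h1, h2⟩
    · exact he3 f hf (Ne.symm hne) h1 h2 ⟨hf1, hf2⟩
    · exact hf3 e he hne h1 h2 ⟨he1, he2⟩
  have hcard : S'.card ≤ (Finset.Ioo 0 (m - 1)).card :=
    Finset.card_le_card_of_injOn apex
      (fun e he => Finset.mem_Ioo.mpr ⟨by have := hapex e he; omega,
        by have := hapex e he; have := hS' e he; omega⟩) hinj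
  rw [Finset.card_insert_of_notMem (fun h => (hS _ h).2.2 rfl), Nat.card_Ioo] at hcard
  omega

end Laminar

def IsDiagonal (m : ℕ) (e : Sym2 (Fin m)) : Prop :=
  ∃ a b : Fin m, e = s(a, b) ∧ (a : ℕ) + 2 ≤ (b : ℕ) ∧ ¬((a : ℕ) = 0 ∧ (b : ℕ) = m - 1)

section Chords

variable {m : ℕ}

lemma Crosses.symm {e f : Sym2 (Fin m)} (h : Crosses e f) : Crosses f e := by
  obtain ⟨a, b, c, d, h1, h2, h3, h⟩ := h
  exact ⟨a, b, c, d, h1, h2, h3, h.symm.imp And.symm And.symm⟩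

lemma Crosses.isDiagonal_left {e f : Sym2 (Fin m)} (h : Crosses e f) : IsDiagonal m e := by
  obtain ⟨a, b, c, d, hab, hbc, hcd, ⟨rfl, -⟩ | ⟨rfl, -⟩⟩ := h <;> rw [Fin.lt_def] at hab hbc hcd
  · exact ⟨a, c, rfl, by omega, by have := d.2; omega⟩
  · exact ⟨b, d, rfl, by omega, by omega⟩

lemma not_crosses_self (e : Sym2 (Fin m)) : ¬ Crosses e e := by
  rintro ⟨a, b, c, d, hab, hbc, hcd, ⟨h, rfl⟩ | ⟨rfl, h⟩⟩ <;>
    rcases Sym2.eq_iff.mp h with ⟨rfl, rfl⟩ | ⟨rfl, rfl⟩ <;> simp_all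

lemma exists_eq_mk_le (e : Sym2 (Fin m)) : ∃ a b : Fin m, a ≤ b ∧ e = s(a, b) := by
  induction e using Sym2.ind with
  | _ a b =>
    rcases le_total a b with h | h
    · exact ⟨a, b, h, rfl⟩
    · exact ⟨b, a, h, Sym2.eq_swap⟩

lemma crosses_mk_iff {a b c d : Fin m} (hab : a ≤ b) (hcd : c ≤ d) :
    Crosses s(a, b) s(c, d) ↔ IntervalsCross (a, b) (c, d) := by
  rw [Fin.le_def] at hab hcd
  constructor
  · rintro ⟨p, q, r, s, h1, h2, h3, ⟨h, h'⟩ | ⟨h, h'⟩⟩ <;> rw [Fin.lt_def] at h1 h2 h3 <;>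
      rcases Sym2.eq_iff.mp h with ⟨rfl, rfl⟩ | ⟨rfl, rfl⟩ <;>
      rcases Sym2.eq_iff.mp h' with ⟨rfl, rfl⟩ | ⟨rfl, rfl⟩ <;> unfold IntervalsCross <;> omega
  · rintro (⟨h1, h2, h3⟩ | ⟨h1, h2, h3⟩)
    · exact ⟨a, c, b, d, h1, h2, h3, Or.inl ⟨rfl, rfl⟩⟩
    · exact ⟨c, a, d, b, h1, h2, h3, Or.inr ⟨rfl, rfl⟩⟩

end Chords

section Rotation

variable {n : ℕ} (v : Fin n)

def rot (x : Fin n) : ℕ := if (v : ℕ) ≤ x then (x : ℕ) - v else (x : ℕ) + n - v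

lemma rot_lt (x : Fin n) : rot v x < n := by
  unfold rot; split <;> omega

@[simp] lemma rot_self : rot v v = 0 := by simp [rot]

lemma rot_injective : Function.Injective (rot v) := by
  intro x y h
  unfold rot at h
  apply Fin.ext
  split at h <;> split at h <;> omega

lemma exists_rot_eq {k : ℕ} (hk : k < n) : ∃ x, rot v x = k := by
  by_cases h : (v : ℕ) + k < n
  · exact ⟨⟨v + k, h⟩, by simp [rot]⟩
  · exact ⟨⟨v + k - n, by omega⟩, by unfold rot; split <;> simp_all <;> omega⟩

def span : Sym2 (Fin n) → ℕ × ℕ :=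
  Sym2.lift ⟨fun a b => (min (rot v a) (rot v b), max (rot v a) (rot v b)),
    fun _ _ => Prod.ext (min_comm _ _) (max_comm _ _)⟩

@[simp] lemma span_mk (a b : Fin n) :
    span v s(a, b) = (min (rot v a) (rot v b), max (rot v a) (rot v b)) := rfl

lemma span_injective : Function.Injective (span v) := by
  intro e f h
  induction e, f using Sym2.inductionOn₂ with
  | _ a b c d =>
    simp only [span_mk, Prod.mk.injEq] at h
    have : rot v a = rot v c ∧ rot v b = rot v d ∨ rot v a = rot v d ∧ rot v b = rot v c := by
      omega
    rcases this with ⟨h1, h2⟩ | ⟨h1, h2⟩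
    · rw [rot_injective v h1, rot_injective v h2]
    · rw [rot_injective v h1, rot_injective v h2, Sym2.eq_swap]

lemma span_fst_le_snd (e : Sym2 (Fin n)) : (span v e).1 ≤ (span v e).2 := by
  induction e using Sym2.ind with
  | _ a b => simp only [span_mk]; omega

lemma span_snd_lt (e : Sym2 (Fin n)) : (span v e).2 < n := by
  induction e using Sym2.ind with
  | _ a b => simpa only [span_mk] using max_lt (rot_lt v a) (rot_lt v b)

lemma notMem_of_span_fst_pos {e : Sym2 (Fin n)} (h : 0 < (span v e).1) : v ∉ e := by
  induction e using Sym2.ind with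
  | _ a b => rw [Sym2.mem_iff]; rintro (rfl | rfl) <;> simp at h

lemma crosses_iff_intervalsCross (e f : Sym2 (Fin n)) :
    Crosses e f ↔ IntervalsCross (span v e) (span v f) := by
  obtain ⟨a, b, hab, rfl⟩ := exists_eq_mk_le e
  obtain ⟨c, d, hcd, rfl⟩ := exists_eq_mk_le f
  rw [crosses_mk_iff hab hcd, span_mk, span_mk]
  rw [Fin.le_def] at hab hcd
  have := a.2; have := b.2; have := c.2; have := d.2
  unfold IntervalsCross rot
  split_ifs <;> omega

lemma crosses_mk_self_iff (z : Fin n) (e : Sym2 (Fin n)) :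
    Crosses s(v, z) e ↔ 0 < (span v e).1 ∧ (span v e).1 < rot v z ∧ rot v z < (span v e).2 := by
  have := span_fst_le_snd v e
  rw [crosses_iff_intervalsCross v, span_mk, rot_self]
  unfold IntervalsCross
  omega

lemma isDiagonal_iff_span (e : Sym2 (Fin n)) :
    IsDiagonal n e ↔ (span v e).1 + 2 ≤ (span v e).2 ∧ span v e ≠ (0, n - 1) := by
  induction e using Sym2.ind with
  | _ a b =>
    have := a.2; have := b.2; have := v.2
    simp only [span_mk, ne_eq, Prod.mk.injEq]
    constructor
    · rintro ⟨a', b', h, h1, h2⟩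
      rcases Sym2.eq_iff.mp h with ⟨rfl, rfl⟩ | ⟨rfl, rfl⟩ <;> unfold rot <;> split_ifs <;> omega
    · intro h
      rcases le_total (a : ℕ) b with hab | hab
      · exact ⟨a, b, rfl, by unfold rot at h; split_ifs at h <;> omega,
          by unfold rot at h; split_ifs at h <;> omega⟩
      · exact ⟨b, a, Sym2.eq_swap, by unfold rot at h; split_ifs at h <;> omega,
          by unfold rot at h; split_ifs at h <;> omega⟩

end Rotation

section Triangulation

variable {n : ℕ}

lemma card_le_of_pairwise_not_crosses {S : Finset (Sym2 (Fin n))}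
    (hS : ∀ e ∈ S, IsDiagonal n e) (hSS : ∀ e ∈ S, ∀ f ∈ S, ¬ Crosses e f) :
    S.card ≤ n - 3 := by
  classical
  rcases S.eq_empty_or_nonempty with rfl | ⟨e₀, he₀⟩
  · simp
  obtain ⟨v, -, -, -, -⟩ := hS e₀ he₀
  rw [← Finset.card_image_of_injective S (span_injective v)]
  refine card_le_of_pairwise_not_intervalsCross n ?_ ?_
  · simp only [Finset.mem_image, forall_exists_index, and_imp]
    rintro _ e he rfl
    exact ⟨((isDiagonal_iff_span v e).mp (hS e he)).1, span_snd_lt v e,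
      ((isDiagonal_iff_span v e).mp (hS e he)).2⟩
  · simp only [Finset.mem_image, forall_exists_index, and_imp]
    rintro _ e he rfl _ f hf rfl
    exact (crosses_iff_intervalsCross v e f).not.mp (hSS e he f hf)

lemma IsPolygonTriangulation.mem_of_forall_not_crosses {T : Finset (Sym2 (Fin n))}
    (hT : IsPolygonTriangulation n T) {d : Sym2 (Fin n)} (hd : IsDiagonal n d)
    (hfree : ∀ e ∈ T, ¬ Crosses d e) : d ∈ T := by
  classical
  by_contra hdT
  have := card_le_of_pairwise_not_crosses (S := insert d T)
    (by simp only [Finset.mem_insert, forall_eq_or_imp]; exact ⟨hd, hT.1⟩)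
    (by simp only [Finset.mem_insert, forall_eq_or_imp]
        exact ⟨⟨not_crosses_self d, hfree⟩,
          fun e he => ⟨fun h => hfree e he h.symm, hT.2.1 e he⟩⟩)
  rw [Finset.card_insert_of_notMem hdT, hT.2.2] at this
  omega

lemma exists_isDiagonal_mk_notMem (T : Finset (Sym2 (Fin n))) (v : Fin n)
    (hdeg : (T.filter (v ∈ ·)).card < n - 3) : ∃ z, IsDiagonal n s(v, z) ∧ s(v, z) ∉ T := by
  classical
  set D := Finset.univ.filter (fun z => 2 ≤ rot v z ∧ rot v z ≤ n - 2)
  have hD : D.image (rot v) = Finset.Icc 2 (n - 2) := by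
    ext k
    simp only [D, Finset.mem_image, Finset.mem_filter, Finset.mem_univ, true_and,
      Finset.mem_Icc]
    constructor
    · rintro ⟨z, hz, rfl⟩
      exact hz
    · intro hk
      obtain ⟨z, rfl⟩ := exists_rot_eq v (show k < n by omega)
      exact ⟨z, hk, rfl⟩
  have hDcard : D.card = n - 3 := by
    rw [← Finset.card_image_of_injective D (rot_injective v), hD, Nat.card_Icc]
    omega
  by_contra! hall
  have hdiag : ∀ z ∈ D, IsDiagonal n s(v, z) := by
    intro z hz
    obtain ⟨-, hz⟩ := Finset.mem_filter.mp hz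
    rw [isDiagonal_iff_span v, span_mk, rot_self]
    simp only [Nat.zero_min, Nat.zero_max, ne_eq, Prod.mk.injEq, true_and]
    omega
  have : D.card ≤ (T.filter (v ∈ ·)).card :=
    Finset.card_le_card_of_injOn (fun z => s(v, z))
      (fun z hz => Finset.mem_filter.mpr ⟨hall z (hdiag z hz), Sym2.mem_mk_left v z⟩)
      (fun _ _ _ _ h => Sym2.congr_right.mp h)
  omega

lemma IsPolygonTriangulation.exists_crosses_unique {T : Finset (Sym2 (Fin n))}
    (hT : IsPolygonTriangulation n T) (v : Fin n) {z₀ : Fin n} {e₀ : Sym2 (Fin n)}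
    (he₀ : e₀ ∈ T) (hcross₀ : Crosses s(v, z₀) e₀) :
    ∃ z, ∃ e ∈ T, Crosses s(v, z) e ∧ ∀ g ∈ T, Crosses s(v, z) g → g = e := by
  classical
  set S := (T.image (span v)).filter (fun p => 0 < p.1)
  have mem_S {g} (hg : g ∈ T) (h : 0 < (span v g).1) : span v g ∈ S :=
    Finset.mem_filter.mpr ⟨Finset.mem_image_of_mem _ hg, h⟩
  have hS : ∀ p ∈ S, p.1 < p.2 := by
    simp only [S, Finset.mem_filter, Finset.mem_image]
    rintro _ ⟨⟨e, he, rfl⟩, -⟩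
    have := ((isDiagonal_iff_span v e).mp (hT.1 e he)).1
    omega
  have hSS : ∀ p ∈ S, ∀ q ∈ S, ¬ IntervalsCross p q := by
    simp only [S, Finset.mem_filter, Finset.mem_image]
    rintro _ ⟨⟨e, he, rfl⟩, -⟩ _ ⟨⟨f, hf, rfl⟩, -⟩
    exact (crosses_iff_intervalsCross v e f).not.mp (hT.2.1 e he f hf)
  obtain ⟨h₀, hx₀⟩ := (crosses_mk_self_iff v z₀ e₀).mp hcross₀
  obtain ⟨x, J, hJ, hx, hxJ, huniq⟩ := exists_unique_interval_containing hS hSS (mem_S he₀ h₀) hx₀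
  obtain ⟨hJT, hJpos⟩ := Finset.mem_filter.mp hJ
  obtain ⟨e, he, rfl⟩ := Finset.mem_image.mp hJT
  obtain ⟨z, rfl⟩ := exists_rot_eq v (hxJ.trans (span_snd_lt v e))
  refine ⟨z, e, he, (crosses_mk_self_iff v z e).mpr ⟨hJpos, hx, hxJ⟩, fun g hg hcross => ?_⟩
  obtain ⟨hg₀, hg₁, hg₂⟩ := (crosses_mk_self_iff v z g).mp hcross
  exact span_injective v (huniq _ (mem_S hg hg₀) hg₁ hg₂)

lemma IsPolygonTriangulation.flip {T : Finset (Sym2 (Fin n))} (hT : IsPolygonTriangulation n T)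
    {e f : Sym2 (Fin n)} (he : e ∈ T) (hfe : Crosses f e)
    (huniq : ∀ g ∈ T, Crosses f g → g = e) :
    IsPolygonTriangulation n (insert f (T.erase e)) := by
  classical
  have hfT : f ∉ T.erase e := fun h => hT.2.1 f (Finset.mem_of_mem_erase h) e he hfe
  have hrest : ∀ g ∈ T.erase e, ¬ Crosses f g := fun g hg h =>
    Finset.ne_of_mem_erase hg (huniq g (Finset.mem_of_mem_erase hg) h)
  refine ⟨?_, ?_, ?_⟩
  · simp only [Finset.mem_insert, forall_eq_or_imp]
    exact ⟨hfe.isDiagonal_left, fun g hg => hT.1 g (Finset.mem_of_mem_erase hg)⟩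
  · simp only [Finset.mem_insert, forall_eq_or_imp]
    exact ⟨⟨not_crosses_self f, hrest⟩, fun g hg => ⟨fun h => hrest g hg h.symm, fun g' hg' =>
      hT.2.1 g (Finset.mem_of_mem_erase hg) g' (Finset.mem_of_mem_erase hg')⟩⟩
  · rw [Finset.card_insert_of_notMem hfT, Finset.card_erase_of_mem he, hT.2.2]
    have := hT.2.2 ▸ Finset.card_pos.mpr ⟨e, he⟩
    omega

end Triangulation

lemma card_filter_mem_insert_erase {α : Type*} [DecidableEq α] {T : Finset (Sym2 α)}
    {e f : Sym2 α} {v : α} (hf : f ∉ T) (hvf : v ∈ f) (hve : v ∉ e) :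
    ((insert f (T.erase e)).filter (v ∈ ·)).card = (T.filter (v ∈ ·)).card + 1 := by
  rw [Finset.filter_insert, if_pos hvf, Finset.filter_erase,
    Finset.erase_eq_of_notMem
      (show e ∉ T.filter (v ∈ ·) from fun h => hve (Finset.mem_filter.mp h).2),
    Finset.card_insert_of_notMem (fun h => hf (Finset.mem_filter.mp h).1)]

theorem stmt16_general (n : ℕ) (T : Finset (Sym2 (Fin n)))
    (hT : IsPolygonTriangulation n T) (v : Fin n)
    (hdeg : 2 + (T.filter (fun e => v ∈ e)).card < n - 1) :
    ∃ e f : Sym2 (Fin n), e ∈ T ∧ f ∉ T ∧ v ∉ e ∧ v ∈ f ∧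
      IsPolygonTriangulation n (insert f (T.erase e)) ∧
      ((insert f (T.erase e)).filter (fun e => v ∈ e)).card =
        (T.filter (fun e => v ∈ e)).card + 1 := by
  obtain ⟨z₀, hdiag, hz₀⟩ := exists_isDiagonal_mk_notMem T v (by omega)
  obtain ⟨e₀, he₀, hcross₀⟩ : ∃ e ∈ T, Crosses s(v, z₀) e := by
    by_contra! h
    exact hz₀ (hT.mem_of_forall_not_crosses hdiag h)
  obtain ⟨z, e, he, hfe, huniq⟩ := hT.exists_crosses_unique v he₀ hcross₀
  have hfT : s(v, z) ∉ T := fun h => hT.2.1 _ h e he hfe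
  have hve : v ∉ e := notMem_of_span_fst_pos v ((crosses_mk_self_iff v z e).mp hfe).1
  exact ⟨e, s(v, z), he, hfT, hve, Sym2.mem_mk_left v z, hT.flip he hfe huniq,
    card_filter_mem_insert_erase hfT (Sym2.mem_mk_left v z) hve⟩

/-- In a triangulation of a convex polygon with `n ≥ 4` vertices, if the degree
of a vertex `v` (its two polygon edges plus its diagonals) is less than
`n - 1`, then some flip increases the degree of `v` by one. -/
theorem stmt16 (n : ℕ) (hn : 4 ≤ n) (T : Finset (Sym2 (Fin n)))
    (hT : IsPolygonTriangulation n T) (v : Fin n)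
    (hdeg : 2 + (T.filter (fun e => v ∈ e)).card < n - 1) :
    ∃ e f : Sym2 (Fin n), e ∈ T ∧ f ∉ T ∧ v ∉ e ∧ v ∈ f ∧
      IsPolygonTriangulation n (insert f (T.erase e)) ∧
      ((insert f (T.erase e)).filter (fun e => v ∈ e)).card =
        (T.filter (fun e => v ∈ e)).card + 1 :=
  stmt16_general n T hT v hdeg
end
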